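/- Let α be a closed finite execution of A and α' a finite execution of A such that the final configurations of α and α' are indistinguishable to the referee p and to some competitor q. Then W(α) ∩ W(α') ≠ ∅. -/

import Mathlib

set_option autoImplicit false

/-! ## Base objects and primitives -/

/-- A base object: a shared-memory object accessed via atomic primitives.
Responses of primitives are encoded as lists of naturals. -/
structure BaseObject : Type 1 where
  State : Type
  init : State
  Prim : Type
  apply : Prim → State → State × List ℕ

/-- A base object has *interfering* primitives if at any state, the application of
any pair of primitives either commutes or one overwrites the other. -/
def Interfering (B : BaseObject) : Prop :=
  ∀ (f g : B.Prim) (s : B.State),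
    (B.apply g (B.apply f s).1).1 = (B.apply f (B.apply g s).1).1 ∨
    (B.apply f (B.apply g s).1).1 = (B.apply f s).1 ∨
    (B.apply g (B.apply f s).1).1 = (B.apply g s).1

/-- A read/write register: primitive `some v` writes `v`, primitive `none` reads. -/
def RWRegister : BaseObject where
  State := ℕ
  init := 0
  Prim := Option ℕ
  apply := fun p s =>
    match p with
    | some v => (v, [])
    | none => (s, [s])

/-- A `w`-window register stores the sequence of the last `w` values written to it;
`some v` appends `v` (dropping the oldest value if the length exceeds `w`),
`none` reads the stored sequence. -/
def WindowRegister (w : ℕ) : BaseObject where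
  State := List ℕ
  init := []
  Prim := Option ℕ
  apply := fun p s =>
    match p with
    | some v => ((s ++ [v]).drop (s.length + 1 - w), [])
    | none => (s, s)

/-- A test&set object: `T&S()` atomically sets the bit and returns the previous value. -/
def TestAndSet : BaseObject where
  State := Bool
  init := false
  Prim := Unit
  apply := fun _ s => (true, [if s then 1 else 0])

/-! ## Sequential specifications -/

/-- A (possibly nondeterministic) sequential specification for `n` processes.
`δ s i op s' r` holds if process `i` invoking `op` in state `s` may move the object
to state `s'` returning `r`.  `allowed i hist op` says whether process `i`, having
already invoked the operations `hist`, may invoke `op` (used to express one-shot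
objects and the referee/competitor roles). -/
structure Spec (n : ℕ) : Type 1 where
  Op : Type
  Res : Type
  State : Type
  init : State
  δ : State → Fin n → Op → State → Res → Prop
  allowed : Fin n → List Op → Op → Bool

/-- Valid sequential executions of a specification, starting at a given state. -/
inductive SeqRun {n : ℕ} (S : Spec n) : S.State → List (Fin n × S.Op × S.Res) → Prop
  | nil (s : S.State) : SeqRun S s []
  | cons {s : S.State} {i : Fin n} {op : S.Op} {s' : S.State} {r : S.Res}
      {l : List (Fin n × S.Op × S.Res)} :
      S.δ s i op s' r → SeqRun S s' l → SeqRun S s ((i, op, r) :: l)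

/-! ## Implementations, configurations and executions -/

/-- Events of an execution: high-level invocations/responses and primitive steps. -/
inductive Event (n : ℕ) (S : Spec n) : Type
  | inv (i : Fin n) (op : S.Op)
  | res (i : Fin n) (r : S.Res)
  | step (i : Fin n)

/-- The process performing an event. -/
def Event.proc {n : ℕ} {S : Spec n} : Event n S → Fin n
  | .inv i _ => i
  | .res i _ => i
  | .step i => i

/-- An implementation of the high-level object `S` for `n` processes from base objects
`M o`, `o : ι`: a deterministic state machine per process.  In local state `ℓ`,
process `i`'s next primitive step applies `prim i ℓ` to base object `obj i ℓ` and
updates the local state with the response via `updL`; `ret i ℓ` is the response of the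
current high-level operation once it is ready. -/
structure Impl (n : ℕ) (S : Spec n) (ι : Type) (M : ι → BaseObject) : Type 1 where
  Local : Fin n → Type
  initL : ∀ i, Local i
  invokeL : ∀ i, S.Op → Local i → Local i
  obj : ∀ i, Local i → ι
  prim : ∀ i (ℓ : Local i), (M (obj i ℓ)).Prim
  updL : ∀ i, Local i → List ℕ → Local i
  ret : ∀ i, Local i → Option S.Res

/-- A configuration: states of all base objects and all processes
(local state, pending operation, history of invoked operations). -/
structure Config {n : ℕ} {S : Spec n} {ι : Type} {M : ι → BaseObject}
    (A : Impl n S ι M) : Type where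
  mem : ∀ o, (M o).State
  loc : ∀ i, A.Local i
  pend : Fin n → Option S.Op
  hist : Fin n → List S.Op

open Classical in
/-- Update the state of one base object in the memory. -/
noncomputable def updMem {ι : Type} {M : ι → BaseObject}
    (mem : ∀ o, (M o).State) (o : ι) (s : (M o).State) : ∀ o', (M o').State :=
  fun o' =>
    if h : o' = o then cast (congrArg (fun x => (M x).State) h).symm s else mem o'

open Classical in
/-- The (deterministic) transition of a configuration by an event; `none` if the event
is not enabled.  An invocation requires the process to be idle and the operation to be
allowed by the specification; a primitive step requires a pending operation whose
response is not yet ready; a response requires the response to be ready. -/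
noncomputable def nextConfig {n : ℕ} {S : Spec n} {ι : Type} {M : ι → BaseObject}
    (A : Impl n S ι M) (C : Config A) : Event n S → Option (Config A)
  | .inv i op =>
    match C.pend i with
    | some _ => none
    | none =>
      if S.allowed i (C.hist i) op then
        some { C with
          pend := Function.update C.pend i (some op)
          hist := Function.update C.hist i (C.hist i ++ [op])
          loc := Function.update C.loc i (A.invokeL i op (C.loc i)) }
      else none
  | .step i =>
    match C.pend i with
    | none => none
    | some _ =>
      if A.ret i (C.loc i) = none then
        some { C with
          mem := updMem C.mem (A.obj i (C.loc i))
            ((M (A.obj i (C.loc i))).apply (A.prim i (C.loc i))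
              (C.mem (A.obj i (C.loc i)))).1
          loc := Function.update C.loc i
            (A.updL i (C.loc i)
              ((M (A.obj i (C.loc i))).apply (A.prim i (C.loc i))
                (C.mem (A.obj i (C.loc i)))).2) }
      else none
  | .res i r =>
    match C.pend i with
    | none => none
    | some _ =>
      if A.ret i (C.loc i) = some r then
        some { C with pend := Function.update C.pend i none }
      else none

/-- The initial configuration. -/
def initConfig {n : ℕ} {S : Spec n} {ι : Type} {M : ι → BaseObject}
    (A : Impl n S ι M) : Config A :=
  { mem := fun o => (M o).init
    loc := fun i => A.initL i
    pend := fun _ => none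
    hist := fun _ => [] }

/-- The configuration reached by a finite sequence of events from the initial
configuration (`none` if the sequence is not a valid execution). -/
noncomputable def execConfig {n : ℕ} {S : Spec n} {ι : Type} {M : ι → BaseObject}
    (A : Impl n S ι M) (α : List (Event n S)) : Option (Config A) :=
  α.foldlM (fun C e => nextConfig A C e) (initConfig A)

/-- `α` is a (finite) execution of the implementation `A`. -/
def IsExec {n : ℕ} {S : Spec n} {ι : Type} {M : ι → BaseObject}
    (A : Impl n S ι M) (α : List (Event n S)) : Prop :=
  (execConfig A α).isSome = true

/-- The length-`m` prefix of an infinite sequence of events. -/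
def prefE {n : ℕ} {S : Spec n} (E : ℕ → Event n S) (m : ℕ) : List (Event n S) :=
  (List.range m).map E

/-! ## Linearizability -/

/-- In execution `α`, the invocation at position `j` is matched by the response at
position `k` with output `r` (no earlier response of the same process intervening). -/
def Matches {n : ℕ} {S : Spec n} (α : List (Event n S)) (j k : ℕ) (r : S.Res) : Prop :=
  ∃ i op, α[j]? = some (Event.inv i op) ∧ α[k]? = some (Event.res i r) ∧ j < k ∧
    ∀ m, j < m → m < k → ∀ r', α[m]? ≠ some (Event.res i r')

/-- The operation invoked at position `j` precedes (returns before the invocation of)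
the operation invoked at position `j'`. -/
def Precedes {n : ℕ} {S : Spec n} (α : List (Event n S)) (j j' : ℕ) : Prop :=
  ∃ k r, Matches α j k r ∧ k < j'

/-- `σ` is a linearization of the execution `α`: a sequence of operation instances of
`α` (identified by the position of their invocation, paired with a response) that
contains every complete operation of `α` with its actual output and possibly some
pending ones, respects the real-time order of `α`, and is a valid sequential
execution of the specification. -/
structure IsLinearization {n : ℕ} (S : Spec n) (α : List (Event n S))
    (σ : List (ℕ × S.Res)) : Prop where
  inv_mem : ∀ p ∈ σ, ∃ i op, α[p.1]? = some (Event.inv i op)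
  nodup : (σ.map Prod.fst).Nodup
  complete_mem : ∀ j k r, Matches α j k r → (j, r) ∈ σ
  complete_out : ∀ j k r r', Matches α j k r → (j, r') ∈ σ → r' = r
  realtime : σ.Pairwise (fun a b => ¬ Precedes α b.1 a.1)
  valid : ∃ l : List (Fin n × S.Op × S.Res),
    List.Forall₂ (fun (p : ℕ × S.Res) (e : Fin n × S.Op × S.Res) =>
      α[p.1]? = some (Event.inv e.1 e.2.1) ∧ p.2 = e.2.2) σ l ∧
    SeqRun S S.init l

/-- `L` is a linearization function for `A`: it maps every execution to a
linearization of it. -/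
def IsLinFun {n : ℕ} {S : Spec n} {ι : Type} {M : ι → BaseObject}
    (A : Impl n S ι M) (L : List (Event n S) → List (ℕ × S.Res)) : Prop :=
  ∀ α, IsExec A α → IsLinearization S α (L α)

/-- `L` is prefix-closed: the linearization of a prefix is a prefix of the
linearization of an extension. -/
def PrefixClosedLin {n : ℕ} {S : Spec n} {ι : Type} {M : ι → BaseObject}
    (A : Impl n S ι M) (L : List (Event n S) → List (ℕ × S.Res)) : Prop :=
  ∀ α β, IsExec A (α ++ β) → L α <+: L (α ++ β)

/-- `L` is subsequence-closed: the linearization of a prefix is a subsequence of the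
linearization of an extension. -/
def SubseqClosedLin {n : ℕ} {S : Spec n} {ι : Type} {M : ι → BaseObject}
    (A : Impl n S ι M) (L : List (Event n S) → List (ℕ × S.Res)) : Prop :=
  ∀ α β, IsExec A (α ++ β) → List.Sublist (L α) (L (α ++ β))

/-- Strong linearizability: there is a prefix-closed linearization function. -/
def StronglyLinearizable {n : ℕ} {S : Spec n} {ι : Type} {M : ι → BaseObject}
    (A : Impl n S ι M) : Prop :=
  ∃ L, IsLinFun A L ∧ PrefixClosedLin A L

/-- Decisive linearizability: there is a subsequence-closed linearization function. -/
def DecisivelyLinearizable {n : ℕ} {S : Spec n} {ι : Type} {M : ι → BaseObject}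
    (A : Impl n S ι M) : Prop :=
  ∃ L, IsLinFun A L ∧ SubseqClosedLin A L

/-! ## Progress conditions -/

/-- Wait-freedom: in every infinite execution, a process that takes infinitely many
primitive steps completes infinitely many operations. -/
def WaitFree {n : ℕ} {S : Spec n} {ι : Type} {M : ι → BaseObject}
    (A : Impl n S ι M) : Prop :=
  ∀ E : ℕ → Event n S, (∀ m, IsExec A (prefE E m)) →
    ∀ i : Fin n, (∀ m, ∃ m', m ≤ m' ∧ E m' = Event.step i) →
      ∀ m, ∃ m', m ≤ m' ∧ ∃ r, E m' = Event.res i r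

/-- Lock-freedom: in every infinite execution, infinitely many operations complete. -/
def LockFree {n : ℕ} {S : Spec n} {ι : Type} {M : ι → BaseObject}
    (A : Impl n S ι M) : Prop :=
  ∀ E : ℕ → Event n S, (∀ m, IsExec A (prefE E m)) →
    ∀ m, ∃ m', m ≤ m' ∧ ∃ i r, E m' = Event.res i r

/-! ## High-level object specifications -/

/-- Queue: operation `some v` is `enqueue(v)` (returning `none`), operation `none` is
`dequeue()`, returning the oldest enqueued value not yet dequeued (`some v`) or
`none` (empty). -/
def QueueSpec (n : ℕ) : Spec n where
  Op := Option ℕ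
  Res := Option ℕ
  State := List ℕ
  init := []
  δ := fun s _ op s' r =>
    (∃ v, op = some v ∧ s' = s ++ [v] ∧ r = none) ∨
    (op = none ∧ ((s = [] ∧ s' = [] ∧ r = none) ∨ ∃ v t, s = v :: t ∧ s' = t ∧ r = some v))
  allowed := fun _ _ _ => true

/-- Stack: operation `some v` is `push(v)` (returning `none`), operation `none` is
`pop()`, returning the most recently pushed value not yet popped (`some v`) or
`none` (empty). -/
def StackSpec (n : ℕ) : Spec n where
  Op := Option ℕ
  Res := Option ℕ
  State := List ℕ
  init := []
  δ := fun s _ op s' r =>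
    (∃ v, op = some v ∧ s' = v :: s ∧ r = none) ∨
    (op = none ∧ ((s = [] ∧ s' = [] ∧ r = none) ∨ ∃ v t, s = v :: t ∧ s' = t ∧ r = some v))
  allowed := fun _ _ _ => true

/-- Operations of the (one-shot or long-lived) contest objects. -/
inductive ContestOp : Type
  | compete
  | decide

/-- The one-shot contest object for `n` processes: each competitor `p_1, …, p_{n-1}`
may invoke `compete()` once, which always returns `true`; the referee `p_0` may invoke
`decide()` once, which returns the index of the first process that executed
`compete()` (`Sum.inr i`) or `false` (`Sum.inl false`) if there is no such operation. -/
def ContestSpec (n : ℕ) : Spec n where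
  Op := ContestOp
  Res := Bool ⊕ ℕ
  State := Option (Fin n) × Bool
  init := (none, false)
  δ := fun s i op s' r =>
    (op = ContestOp.compete ∧ i.val ≠ 0 ∧ r = Sum.inl true ∧ s'.2 = s.2 ∧
      s'.1 = (match s.1 with | some j => some j | none => some i)) ∨
    (op = ContestOp.decide ∧ i.val = 0 ∧ s.2 = false ∧ s' = (s.1, true) ∧
      r = (match s.1 with | some j => Sum.inr j.val | none => Sum.inl false))
  allowed := fun i hist op =>
    hist.isEmpty &&
      (match op with
       | ContestOp.compete => i.val != 0
       | ContestOp.decide => i.val == 0)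

/-- The long-lived contest object for `n` processes: each competitor `p_1, …, p_{n-1}`
may invoke `compete()` any number of times (returning nothing, i.e. `none`); the
referee `p_0` may invoke `decide()` at most once, which returns `some x` for some
integer `x` such that every competitor has executed at most `x` operations so far. -/
def LLContestSpec (n : ℕ) : Spec n where
  Op := ContestOp
  Res := Option ℕ
  State := (Fin n → ℕ) × Bool
  init := (fun _ => 0, false)
  δ := fun s i op s' r =>
    (op = ContestOp.compete ∧ i.val ≠ 0 ∧
      s' = (Function.update s.1 i (s.1 i + 1), s.2) ∧ r = none) ∨
    (op = ContestOp.decide ∧ i.val = 0 ∧ s.2 = false ∧ s'.2 = true ∧ s'.1 = s.1 ∧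
      ∃ x : ℕ, r = some x ∧ ∀ j : Fin n, j.val ≠ 0 → s.1 j ≤ x)
  allowed := fun i hist op =>
    match op with
    | ContestOp.compete => i.val != 0
    | ContestOp.decide => (i.val == 0) && hist.isEmpty

/-- Counter: operation `true` is `increment()` (returning `none`), operation `false`
is `read()`, returning the number of increments so far. -/
def CounterSpec (n : ℕ) : Spec n where
  Op := Bool
  Res := Option ℕ
  State := ℕ
  init := 0
  δ := fun s _ op s' r =>
    (op = true ∧ s' = s + 1 ∧ r = none) ∨ (op = false ∧ s' = s ∧ r = some s)
  allowed := fun _ _ _ => true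

/-- Max register: operation `some v` is `maxWrite(v)` (returning `none`), operation
`none` is `maxRead()`, returning the largest value written so far. -/
def MaxRegSpec (n : ℕ) : Spec n where
  Op := Option ℕ
  Res := Option ℕ
  State := ℕ
  init := 0
  δ := fun s _ op s' r =>
    (∃ v, op = some v ∧ s' = max s v ∧ r = none) ∨ (op = none ∧ s' = s ∧ r = some s)
  allowed := fun _ _ _ => true

/-- Snapshot with `n` components: operation `Sum.inl (j, v)` atomically updates
component `j` to `v` (returning `none`); operation `Sum.inr ()` is `scan()`,
atomically returning all components. -/
def SnapshotSpec (n : ℕ) : Spec n where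
  Op := (Fin n × ℕ) ⊕ Unit
  Res := Option (Fin n → ℕ)
  State := Fin n → ℕ
  init := fun _ => 0
  δ := fun s _ op s' r =>
    (∃ j v, op = Sum.inl (j, v) ∧ s' = Function.update s j v ∧ r = none) ∨
    (op = Sum.inr () ∧ s' = s ∧ r = some s)
  allowed := fun _ _ _ => true

/-- Fetch&increment: atomically returns the current value and increments it. -/
def FetchIncSpec (n : ℕ) : Spec n where
  Op := Unit
  Res := ℕ
  State := ℕ
  init := 0
  δ := fun s _ _ s' r => s' = s + 1 ∧ r = s
  allowed := fun _ _ _ => true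

/-- Fetch&add: `fetch&add(v)` atomically returns the current value and adds `v`. -/
def FetchAddSpec (n : ℕ) : Spec n where
  Op := ℕ
  Res := ℕ
  State := ℕ
  init := 0
  δ := fun s _ op s' r => s' = s + op ∧ r = s
  allowed := fun _ _ _ => true

/-! ## Valency machinery for the long-lived contest object -/

/-- A sequence of events involves only the competitors `p_1, …, p_{n-1}`. -/
def CompetitorsOnly {n : ℕ} {S : Spec n} (β : List (Event n S)) : Prop :=
  ∀ e ∈ β, (Event.proc e).val ≠ 0

/-- `decide()` appears in the linearization `L α` with output `x`. -/
def DecidesVal {n : ℕ}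
    (L : List (Event n (LLContestSpec n)) → List (ℕ × (LLContestSpec n).Res))
    (α : List (Event n (LLContestSpec n))) (x : ℕ) : Prop :=
  ∃ j : ℕ, ∃ i : Fin n, i.val = 0 ∧
    α[j]? = some (Event.inv i ContestOp.decide) ∧ (j, (some x : Option ℕ)) ∈ L α

/-- The competitors-valency `W(α)`: all `x` such that some finite competitors-only
extension `β` of `α` has `decide()` appearing in `L(αβ)` with output `x`. -/
def Wset {n : ℕ} {ι : Type} {M : ι → BaseObject} (A : Impl n (LLContestSpec n) ι M)
    (L : List (Event n (LLContestSpec n)) → List (ℕ × (LLContestSpec n).Res))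
    (α : List (Event n (LLContestSpec n))) : Set ℕ :=
  { x | ∃ β, CompetitorsOnly β ∧ IsExec A (α ++ β) ∧ DecidesVal L (α ++ β) x }

/-- `α` is competitors-closed: every infinite competitors-only extension of `α` has a
finite prefix `β` such that `decide()` appears in `L(αβ)`. -/
def ClosedExec {n : ℕ} {ι : Type} {M : ι → BaseObject} (A : Impl n (LLContestSpec n) ι M)
    (L : List (Event n (LLContestSpec n)) → List (ℕ × (LLContestSpec n).Res))
    (α : List (Event n (LLContestSpec n))) : Prop :=
  ∀ E : ℕ → Event n (LLContestSpec n),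
    (∀ m, (Event.proc (E m)).val ≠ 0) →
    (∀ m, IsExec A (α ++ prefE E m)) →
    ∃ m x, DecidesVal L (α ++ prefE E m) x

/-- `α` is competitors-supervalent: not competitors-closed. -/
def SupervalentExec {n : ℕ} {ι : Type} {M : ι → BaseObject}
    (A : Impl n (LLContestSpec n) ι M)
    (L : List (Event n (LLContestSpec n)) → List (ℕ × (LLContestSpec n).Res))
    (α : List (Event n (LLContestSpec n))) : Prop :=
  ¬ ClosedExec A L α

/-- The next event of process `r` in configuration `C` of an implementation of the
long-lived contest object: invoke its (unique) operation if idle, respond if the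
response is ready, and otherwise take its next primitive step. -/
noncomputable def llNextEvent {n : ℕ} {ι : Type} {M : ι → BaseObject}
    (A : Impl n (LLContestSpec n) ι M) (C : Config A) (r : Fin n) :
    Event n (LLContestSpec n) :=
  match C.pend r with
  | none => Event.inv r (if r.val = 0 then ContestOp.decide else ContestOp.compete)
  | some _ =>
    match A.ret r (C.loc r) with
    | some v => Event.res r v
    | none => Event.step r

/-- `α` extended by the next step of process `r` (written `αr` in the paper);
`α` is left unchanged if `r` has no enabled next step. -/
noncomputable def sched1 {n : ℕ} {ι : Type} {M : ι → BaseObject}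
    (A : Impl n (LLContestSpec n) ι M) (α : List (Event n (LLContestSpec n)))
    (r : Fin n) : List (Event n (LLContestSpec n)) :=
  match execConfig A α with
  | none => α
  | some C =>
    match nextConfig A C (llNextEvent A C r) with
    | none => α
    | some _ => α ++ [llNextEvent A C r]

/-- `α` extended by scheduling the listed processes, each taking its next step in
order; e.g. `sched A α [q, p]` is the execution `αqp` of the paper. -/
noncomputable def sched {n : ℕ} {ι : Type} {M : ι → BaseObject}
    (A : Impl n (LLContestSpec n) ι M) :
    List (Event n (LLContestSpec n)) → List (Fin n) → List (Event n (LLContestSpec n))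
  | α, [] => α
  | α, r :: rs => sched A (sched1 A α r) rs

/-- The final configurations of executions `α` and `α'` are indistinguishable to
process `r`: all base objects have the same states, and `r` is in the same state. -/
def ExecIndistTo {n : ℕ} {S : Spec n} {ι : Type} {M : ι → BaseObject}
    (A : Impl n S ι M) (α α' : List (Event n S)) (r : Fin n) : Prop :=
  ∃ C C', execConfig A α = some C ∧ execConfig A α' = some C' ∧
    C.mem = C'.mem ∧ C.loc r = C'.loc r ∧ C.pend r = C'.pend r ∧ C.hist r = C'.hist r

/-!
Let `p` be the referee. Run `q` alone from `α`. Since `α` is closed, `decide()` is linearized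
with some output `x` in `L(αβ)` for a finite prefix `β` of this solo run, and by wait-freedom `β`
can be taken long enough for `q` to complete `x + 1` operations in it. Only `q` moves in `β`, so
`β` also extends `α'`, and `αβ`, `α'β` are still indistinguishable to `p` and `q`. Now let `p`
run alone until its `decide()` returns (wait-freedom again): the same steps extend `α'β`, and `p`
returns the same response in both runs. After `αβ` this response is `x`, since `L(αβ)` has already
fixed the output, so `decide()` is linearized with output `x` in the extension of `α'β`. It cannot
come after all of `L(α'β)`, which contains the `x + 1` completed `compete()`s of `q`: a `decide()`
linearized after them cannot return `x`. Hence it is already in `L(α'β)`, and `x ∈ W(α) ∩ W(α')`.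
-/

theorem List.getElem?_append_of_eq_some {α : Type*} {l l' : List α} {x : α} {k : ℕ}
    (h : l[k]? = some x) : (l ++ l')[k]? = some x := by
  rw [List.getElem?_append_left (List.getElem?_eq_some_iff.1 h).1, h]

theorem List.getElem?_append_singleton_eq_some {α : Type*} {l : List α} {a x : α} {k : ℕ} :
    (l ++ [a])[k]? = some x ↔ l[k]? = some x ∨ (k = l.length ∧ a = x) := by
  refine ⟨fun h => ?_, ?_⟩
  · rw [List.getElem?_append, List.getElem?_singleton] at h
    split_ifs at h with hk hk'
    · exact .inl h
    · exact .inr ⟨by omega, Option.some.inj h⟩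
  · rintro (h | ⟨rfl, rfl⟩)
    exacts [List.getElem?_append_of_eq_some h, List.getElem?_concat_length]

theorem List.Forall₂.exists_getElem?_eq_some {α β : Type*} {R : α → β → Prop} {l₁ : List α}
    {l₂ : List β} (h : List.Forall₂ R l₁ l₂) {k : ℕ} {a : α} (hk : l₁[k]? = some a) :
    ∃ b, l₂[k]? = some b ∧ R a b := by
  induction h generalizing k with
  | nil => simp at hk
  | cons hab _ ih =>
    cases k with
    | zero => simp_all
    | succ k => exact ih (by simpa using hk)

theorem List.Forall₂.countP_le {α β : Type*} {R : α → β → Prop} {P : α → Bool} {Q : β → Bool}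
    {l₁ : List α} {l₂ : List β} (h : List.Forall₂ R l₁ l₂) (hPQ : ∀ a b, R a b → P a → Q b) :
    l₁.countP P ≤ l₂.countP Q := by
  induction h with
  | nil => simp
  | @cons a b _ _ hab _ ih =>
    simp only [List.countP_cons]
    cases ha : P a
    · simp only [Bool.false_eq_true, ↓reduceIte]
      split_ifs <;> omega
    · simp only [hPQ a b hab ha, ↓reduceIte]
      omega

theorem Finset.card_le_countP_fst_mem {α β : Type*} [DecidableEq β] (l : List (β × α))
    (J : Finset β) (hJ : ∀ j ∈ J, ∃ a, (j, a) ∈ l) : J.card ≤ l.countP (fun e => e.1 ∈ J) := by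
  calc J.card ≤ ((l.filter (fun e => e.1 ∈ J)).map Prod.fst).toFinset.card := by
        refine Finset.card_le_card fun j hj => ?_
        obtain ⟨a, ha⟩ := hJ j hj
        simp only [List.mem_toFinset, List.mem_map, List.mem_filter]
        exact ⟨(j, a), ⟨ha, by simpa using hj⟩, rfl⟩
    _ ≤ l.countP (fun e => e.1 ∈ J) :=
        (List.toFinset_card_le _).trans (by simp [List.countP_eq_length_filter])

section Execution

variable {n : ℕ} {S : Spec n} {ι : Type} {M : ι → BaseObject} {A : Impl n S ι M}

theorem execConfig_append (α β : List (Event n S)) :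
    execConfig A (α ++ β) = (execConfig A α).bind (β.foldlM (nextConfig A)) := by
  simp only [execConfig, List.foldlM_append]
  rfl

theorem execConfig_snoc (α : List (Event n S)) (e : Event n S) :
    execConfig A (α ++ [e]) = (execConfig A α).bind (nextConfig A · e) := by
  rw [execConfig_append]
  congr 1
  funext C
  simp only [List.foldlM_cons, List.foldlM_nil]
  cases nextConfig A C e <;> rfl

theorem isExec_iff {α : List (Event n S)} : IsExec A α ↔ ∃ C, execConfig A α = some C :=
  Option.isSome_iff_exists

theorem IsExec.of_prefix {α β : List (Event n S)} (h : IsExec A β) (hαβ : α <+: β) :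
    IsExec A α := by
  obtain ⟨γ, rfl⟩ := hαβ
  obtain ⟨C, hC⟩ := isExec_iff.1 h
  rw [execConfig_append] at hC
  obtain ⟨D, hD, -⟩ := Option.bind_eq_some_iff.1 hC
  exact isExec_iff.2 ⟨D, hD⟩

theorem execConfig_induction {P : ∀ α C, execConfig A α = some C → Prop}
    (nil : P [] (initConfig A) rfl)
    (snoc : ∀ α e C D (hC : execConfig A α = some C) (hD : nextConfig A C e = some D),
      P α C hC → P (α ++ [e]) D (by rw [execConfig_snoc, hC]; exact hD))
    {α : List (Event n S)} {C : Config A} (hC : execConfig A α = some C) : P α C hC := by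
  induction α using List.reverseRecOn generalizing C with
  | nil => cases hC; exact nil
  | append_singleton α e ih =>
    have hC' := hC
    rw [execConfig_snoc] at hC'
    obtain ⟨B, hB, hBC⟩ := Option.bind_eq_some_iff.1 hC'
    exact snoc α e B C hB hBC (ih hB)

theorem exists_nextConfig_of_getElem? {α : List (Event n S)} {k : ℕ} {e : Event n S}
    (hα : IsExec A α) (hk : α[k]? = some e) :
    ∃ C D, execConfig A (α.take k) = some C ∧ nextConfig A C e = some D := by
  have htake : α.take (k + 1) = α.take k ++ [e] := by
    rw [List.take_add_one, hk]; rfl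
  obtain ⟨D, hD⟩ := isExec_iff.1 (hα.of_prefix (List.take_prefix (k + 1) α))
  rw [htake, execConfig_snoc] at hD
  obtain ⟨C, hC, hCD⟩ := Option.bind_eq_some_iff.1 hD
  exact ⟨C, D, hC, hCD⟩

def Config.procState (C : Config A) (i : Fin n) : A.Local i × Option S.Op × List S.Op :=
  (C.loc i, C.pend i, C.hist i)

theorem Config.procState_eq_iff {C C' : Config A} {i : Fin n} :
    C.procState i = C'.procState i ↔
      C.loc i = C'.loc i ∧ C.pend i = C'.pend i ∧ C.hist i = C'.hist i := by
  simp [Config.procState]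

theorem nextConfig_procState_of_ne {C D : Config A} {e : Event n S} {i : Fin n}
    (h : nextConfig A C e = some D) (hi : e.proc ≠ i) : D.procState i = C.procState i := by
  cases e <;> simp only [Event.proc] at hi <;>
    simp only [nextConfig] at h <;> split at h <;> (try split at h) <;> cases h <;>
    simp [Config.procState, Function.update_of_ne (Ne.symm hi)]

theorem nextConfig_inv_eq_some {C D : Config A} {i : Fin n} {op : S.Op}
    (h : nextConfig A C (.inv i op) = some D) :
    C.pend i = none ∧ S.allowed i (C.hist i) op ∧ D.pend i = some op ∧
      D.hist i = C.hist i ++ [op] := by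
  simp only [nextConfig] at h
  split at h
  · cases h
  · split at h <;> cases h
    exact ⟨by assumption, by assumption, by simp, by simp⟩

theorem nextConfig_step_eq_some {C D : Config A} {i : Fin n}
    (h : nextConfig A C (.step i) = some D) :
    C.pend i ≠ none ∧ D.pend i = C.pend i ∧ D.hist i = C.hist i := by
  simp only [nextConfig] at h
  split at h
  · cases h
  · split at h <;> cases h
    exact ⟨by simp [*], rfl, rfl⟩

theorem nextConfig_res_eq_some {C D : Config A} {i : Fin n} {r : S.Res}
    (h : nextConfig A C (.res i r) = some D) :
    C.pend i ≠ none ∧ A.ret i (C.loc i) = some r ∧ D.pend i = none ∧ D.loc i = C.loc i ∧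
      D.hist i = C.hist i := by
  simp only [nextConfig] at h
  split at h
  · cases h
  · split at h <;> cases h
    exact ⟨by simp [*], by assumption, by simp, rfl, rfl⟩

theorem nextConfig_congr {C C' D : Config A} {e : Event n S} (hmem : C.mem = C'.mem)
    (hst : C.procState e.proc = C'.procState e.proc) (h : nextConfig A C e = some D) :
    ∃ D', nextConfig A C' e = some D' ∧ D.mem = D'.mem ∧
      D.procState e.proc = D'.procState e.proc := by
  obtain ⟨hloc, hpend, hhist⟩ := Config.procState_eq_iff.1 hst
  cases e <;> simp only [Event.proc] at hloc hpend hhist <;>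
    simp only [nextConfig, ← hpend, ← hhist, ← hloc, ← hmem] at h ⊢ <;>
    split at h <;> (try split at h) <;> cases h <;>
    simp only [Config.procState, Event.proc, Function.update_self, hpend, hhist, hmem] <;>
    (try rw [hloc]) <;> simp_all

theorem nextConfig_pend_ne_none {C D : Config A} {e : Event n S}
    (h : nextConfig A C e = some D) (he : ∀ v, e ≠ .res e.proc v) : D.pend e.proc ≠ none := by
  cases e with
  | inv i op => simp [Event.proc, (nextConfig_inv_eq_some h).2.2.1]
  | step i => exact (nextConfig_step_eq_some h).2.1 ▸ (nextConfig_step_eq_some h).1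
  | res i r => exact (he r rfl).elim

theorem Matches.append {α β : List (Event n S)} {j k : ℕ} {r : S.Res} (h : Matches α j k r) :
    Matches (α ++ β) j k r := by
  obtain ⟨i, op, hj, hk, hjk, hmid⟩ := h
  refine ⟨i, op, List.getElem?_append_of_eq_some hj,
    List.getElem?_append_of_eq_some hk, hjk, fun m hjm hmk r' => ?_⟩
  rw [List.getElem?_append_left ((hmk.trans (List.getElem?_eq_some_iff.1 hk).1))]
  exact hmid m hjm hmk r'

theorem Matches.right_unique {α : List (Event n S)} {j k k' : ℕ} {r r' : S.Res}
    (h : Matches α j k r) (h' : Matches α j k' r') : k = k' := by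
  obtain ⟨i, op, hj, hk, hjk, hmid⟩ := h
  obtain ⟨i', op', hj', hk', hjk', hmid'⟩ := h'
  obtain rfl : i = i' := by rw [hj] at hj'; cases hj'; rfl
  rcases lt_trichotomy k k' with hlt | heq | hgt
  · exact (hmid' k hjk hlt r hk).elim
  · exact heq
  · exact (hmid k' hjk' hgt r' hk').elim

theorem exists_inv_mem_iff_hist_ne_nil {α : List (Event n S)} {C : Config A} (i : Fin n)
    (hC : execConfig A α = some C) : (∃ op, .inv i op ∈ α) ↔ C.hist i ≠ [] := by
  induction hC using execConfig_induction with
  | nil => simp [initConfig]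
  | snoc α e C D _ hD ih =>
    by_cases he : e.proc = i
    · cases e with
      | inv i' op' =>
        obtain rfl : i = i' := he.symm
        simp [(nextConfig_inv_eq_some hD).2.2.2]
      | step i' =>
        obtain rfl : i = i' := he.symm
        simpa [(nextConfig_step_eq_some hD).2.2] using ih
      | res i' r' =>
        obtain rfl : i = i' := he.symm
        simpa [(nextConfig_res_eq_some hD).2.2.2.2] using ih
    · rw [(Config.procState_eq_iff.1 (nextConfig_procState_of_ne hD he)).2.2, ← ih]
      refine exists_congr fun op => ?_
      simp only [List.mem_append, List.mem_singleton, or_iff_left_iff_imp]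
      rintro rfl
      exact (he rfl).elim

/-- Position `j` of `α` holds an invocation by `i` after which `i` has only taken steps. -/
def IsPendingInv (α : List (Event n S)) (i : Fin n) (op : S.Op) (j : ℕ) : Prop :=
  α[j]? = some (.inv i op) ∧ ∀ m e, j < m → α[m]? = some e → e.proc = i → e = .step i

theorem IsPendingInv.snoc {α : List (Event n S)} {i : Fin n} {op : S.Op} {j : ℕ}
    (h : IsPendingInv α i op j) {e : Event n S} (he : e.proc = i → e = .step i) :
    IsPendingInv (α ++ [e]) i op j := by
  refine ⟨List.getElem?_append_of_eq_some h.1, fun m e' hjm hm hproc => ?_⟩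
  rcases List.getElem?_append_singleton_eq_some.1 hm with hm | ⟨-, rfl⟩
  · exact h.2 m e' hjm hm hproc
  · exact he hproc

theorem exists_isPendingInv {α : List (Event n S)} {C : Config A} {i : Fin n} {op : S.Op}
    (hC : execConfig A α = some C) (hop : C.pend i = some op) : ∃ j, IsPendingInv α i op j := by
  induction hC using execConfig_induction generalizing op with
  | nil => cases hop
  | snoc α e C D _ hD ih =>
    by_cases he : e.proc = i
    · cases e with
      | inv i' op' =>
        obtain rfl : i = i' := he.symm
        obtain rfl : op' = op := by simpa [(nextConfig_inv_eq_some hD).2.2.1] using hop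
        refine ⟨α.length, List.getElem?_concat_length, fun m e' hm he' _ => ?_⟩
        simp [List.getElem?_eq_none (show (α ++ [_]).length ≤ m by simpa using hm)] at he'
      | step i' =>
        obtain rfl : i = i' := he.symm
        obtain ⟨j, hj⟩ := ih ((nextConfig_step_eq_some hD).2.1 ▸ hop)
        exact ⟨j, hj.snoc fun _ => rfl⟩
      | res i' r' =>
        obtain rfl : i = i' := he.symm
        simp [(nextConfig_res_eq_some hD).2.2.1] at hop
    · have hpend := (Config.procState_eq_iff.1 (nextConfig_procState_of_ne hD he)).2.1
      obtain ⟨j, hj⟩ := ih (hpend ▸ hop)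
      exact ⟨j, hj.snoc fun h => (he h).elim⟩

theorem IsPendingInv.matches_snoc {α : List (Event n S)} {i : Fin n} {op : S.Op} {j : ℕ}
    (h : IsPendingInv α i op j) (r : S.Res) : Matches (α ++ [.res i r]) j α.length r := by
  refine ⟨i, op, List.getElem?_append_of_eq_some h.1, List.getElem?_concat_length,
    (List.getElem?_eq_some_iff.1 h.1).1, fun m hjm hm r' hres => ?_⟩
  rw [List.getElem?_append_left hm] at hres
  cases h.2 m _ hjm hres rfl

theorem IsPendingInv.eq_of_getElem? {α : List (Event n S)} {i : Fin n} {op op' : S.Op}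
    {j j' : ℕ} (h : IsPendingInv α i op j) (hj' : α[j']? = some (.inv i op'))
    (hlast : ∀ m op'', j' < m → α[m]? ≠ some (.inv i op'')) : j' = j := by
  rcases lt_trichotomy j' j with hlt | heq | hgt
  · exact (hlast j op hlt h.1).elim
  · exact heq
  · cases h.2 j' _ hgt hj' rfl

theorem exists_matches_of_pend_eq_none {α : List (Event n S)} {C : Config A} {i : Fin n}
    {op : S.Op} {j : ℕ} (hC : execConfig A α = some C) (hidle : C.pend i = none)
    (hj : α[j]? = some (.inv i op)) (hlast : ∀ m op', j < m → α[m]? ≠ some (.inv i op')) :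
    ∃ k r, A.ret i (C.loc i) = some r ∧ Matches α j k r := by
  induction hC using execConfig_induction generalizing j with
  | nil => simp at hj
  | snoc α e C D hC hD ih =>
    have hlast' : ∀ m op', j < m → α[m]? ≠ some (.inv i op') :=
      fun m op' hjm hm => hlast m op' hjm (List.getElem?_append_of_eq_some hm)
    by_cases he : e.proc = i
    · cases e with
      | inv i' op' =>
        obtain rfl : i = i' := he.symm
        simp [(nextConfig_inv_eq_some hD).2.2.1] at hidle
      | step i' =>
        obtain rfl : i = i' := he.symm
        exact ((nextConfig_step_eq_some hD).1 ((nextConfig_step_eq_some hD).2.1 ▸ hidle)).elim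
      | res i' r =>
        obtain rfl : i = i' := he.symm
        obtain ⟨hpend, hret, -, hloc, -⟩ := nextConfig_res_eq_some hD
        obtain ⟨op₀, hop₀⟩ := Option.ne_none_iff_exists'.1 hpend
        obtain ⟨j₀, hj₀⟩ := exists_isPendingInv hC hop₀
        have hjα : α[j]? = some (.inv i op) := by
          simpa using List.getElem?_append_singleton_eq_some.1 hj
        obtain rfl := hj₀.eq_of_getElem? hjα hlast'
        exact ⟨α.length, r, hloc ▸ hret, hj₀.matches_snoc r⟩
    · obtain ⟨hloc, hpend, -⟩ := Config.procState_eq_iff.1 (nextConfig_procState_of_ne hD he)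
      have hjα : α[j]? = some (.inv i op) := by
        rcases List.getElem?_append_singleton_eq_some.1 hj with hj | ⟨-, rfl⟩
        · exact hj
        · exact (he rfl).elim
      obtain ⟨k, r, hret, hm⟩ := ih (hpend ▸ hidle) hjα hlast'
      exact ⟨k, r, hloc ▸ hret, hm.append⟩

theorem exists_matches_of_getElem?_res {α : List (Event n S)} {i : Fin n} {r : S.Res} {k : ℕ}
    (hα : IsExec A α) (hk : α[k]? = some (.res i r)) : ∃ j, Matches α j k r := by
  obtain ⟨C, D, hC, hD⟩ := exists_nextConfig_of_getElem? hα hk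
  obtain ⟨op, hop⟩ := Option.ne_none_iff_exists'.1 (nextConfig_res_eq_some hD).1
  obtain ⟨j, hj⟩ := exists_isPendingInv hC hop
  have htake : α.take k ++ [.res i r] = α.take (k + 1) := by
    rw [List.take_add_one, hk]; rfl
  have hlen : (α.take k).length = k :=
    List.length_take_of_le (List.getElem?_eq_some_iff.1 hk).1.le
  have hm := (hj.matches_snoc r).append (β := α.drop (k + 1))
  rw [htake, hlen, List.take_append_drop] at hm
  exact ⟨j, hm⟩

/-- `C` and `C'` are indistinguishable to every process in `s`. -/
def Config.AgreeOn (s : Set (Fin n)) (C C' : Config A) : Prop :=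
  C.mem = C'.mem ∧ ∀ i ∈ s, C.procState i = C'.procState i

theorem Config.AgreeOn.nextConfig {s : Set (Fin n)} {C C' D : Config A} {e : Event n S}
    (h : C.AgreeOn s C') (he : e.proc ∈ s) (hD : nextConfig A C e = some D) :
    ∃ D', nextConfig A C' e = some D' ∧ D.AgreeOn s D' := by
  obtain ⟨D', hD', hmem, hst⟩ := nextConfig_congr h.1 (h.2 _ he) hD
  refine ⟨D', hD', hmem, fun i hi => ?_⟩
  by_cases hei : e.proc = i
  · exact hei ▸ hst
  · rw [nextConfig_procState_of_ne hD hei, nextConfig_procState_of_ne hD' hei]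
    exact h.2 i hi

theorem Config.AgreeOn.execConfig_append {s : Set (Fin n)} {α α' β : List (Event n S)}
    {C C' D : Config A} (h : C.AgreeOn s C') (hC : execConfig A α = some C)
    (hC' : execConfig A α' = some C') (hβ : ∀ e ∈ β, e.proc ∈ s)
    (hD : execConfig A (α ++ β) = some D) :
    ∃ D', execConfig A (α' ++ β) = some D' ∧ D.AgreeOn s D' := by
  induction β using List.reverseRecOn generalizing D with
  | nil => exact ⟨C', by simpa using hC', by simp_all⟩
  | append_singleton β e ih =>
    rw [← List.append_assoc, execConfig_snoc] at hD ⊢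
    obtain ⟨B, hB, hBD⟩ := Option.bind_eq_some_iff.1 hD
    obtain ⟨B', hB', hBB'⟩ := ih (fun e he => hβ e (by simp [he])) hB
    obtain ⟨D', hD', hDD'⟩ := hBB'.nextConfig (hβ e (by simp)) hBD
    exact ⟨D', by rw [hB']; exact hD', hDD'⟩

theorem exists_agreeOn_pair_of_execIndistTo {α α' : List (Event n S)} {p q : Fin n}
    (hp : ExecIndistTo A α α' p) (hq : ExecIndistTo A α α' q) :
    ∃ C C', execConfig A α = some C ∧ execConfig A α' = some C' ∧ C.AgreeOn {p, q} C' := by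
  obtain ⟨C, C', hC, hC', hmem, hp⟩ := hp
  obtain ⟨D, D', hD, hD', -, hq⟩ := hq
  obtain rfl : D = C := Option.some.inj (hD.symm.trans hC)
  obtain rfl : D' = C' := Option.some.inj (hD'.symm.trans hC')
  refine ⟨D, D', hC, hC', hmem, ?_⟩
  rintro i (rfl | rfl)
  exacts [Config.procState_eq_iff.2 hp, Config.procState_eq_iff.2 hq]

end Execution

section Referee

variable {n : ℕ} {ι : Type} {M : ι → BaseObject} {A : Impl n (LLContestSpec n) ι M}

theorem LLContestSpec.eq_decide_of_allowed {i : Fin n} {h : List ContestOp} {op : ContestOp}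
    (hi : i.val = 0) (hallowed : (LLContestSpec n).allowed i h op = true) :
    op = .decide ∧ h = [] := by
  cases op <;> simp_all [LLContestSpec]

theorem referee_inv_eq_decide_and_first {α : List (Event n (LLContestSpec n))} {p : Fin n}
    {op : ContestOp} {j : ℕ} (hα : IsExec A α) (hp : p.val = 0) (hj : α[j]? = some (.inv p op)) :
    op = .decide ∧ ∀ m op', m < j → α[m]? ≠ some (.inv p op') := by
  obtain ⟨C, D, hC, hD⟩ := exists_nextConfig_of_getElem? hα hj
  obtain ⟨hop, hhist⟩ :=
    LLContestSpec.eq_decide_of_allowed hp (nextConfig_inv_eq_some hD).2.1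
  refine ⟨hop, fun m op' hm hm' => (exists_inv_mem_iff_hist_ne_nil p hC).1 ⟨op', ?_⟩ hhist⟩
  exact List.mem_of_getElem? (by rwa [List.getElem?_take, if_pos hm])

theorem referee_inv_unique {α : List (Event n (LLContestSpec n))} {p : Fin n} {op op' : ContestOp}
    {j j' : ℕ} (hα : IsExec A α) (hp : p.val = 0) (hj : α[j]? = some (.inv p op))
    (hj' : α[j']? = some (.inv p op')) : j = j' := by
  rcases lt_trichotomy j j' with hlt | heq | hgt
  · exact ((referee_inv_eq_decide_and_first hα hp hj').2 j op hlt hj).elim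
  · exact heq
  · exact ((referee_inv_eq_decide_and_first hα hp hj).2 j' op' hgt hj').elim

theorem exists_referee_inv {α : List (Event n (LLContestSpec n))} {C : Config A} {p : Fin n}
    (hC : execConfig A α = some C) (hp : p.val = 0) (hhist : C.hist p ≠ []) :
    ∃ j : ℕ, α[j]? = some (.inv p .decide) := by
  obtain ⟨op, hop⟩ := (exists_inv_mem_iff_hist_ne_nil p hC).2 hhist
  obtain ⟨j, hj⟩ := List.mem_iff_getElem?.1 hop
  obtain rfl := (referee_inv_eq_decide_and_first (isExec_iff.2 ⟨C, hC⟩) hp hj).1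
  exact ⟨j, hj⟩

theorem referee_matches_of_pend_eq_none {α : List (Event n (LLContestSpec n))} {C : Config A}
    {p : Fin n} {op : ContestOp} {j : ℕ} (hC : execConfig A α = some C) (hp : p.val = 0)
    (hidle : C.pend p = none) (hj : α[j]? = some (.inv p op)) :
    ∃ k r, A.ret p (C.loc p) = some r ∧ Matches α j k r :=
  exists_matches_of_pend_eq_none hC hidle hj fun _ _ hjm hm =>
    hjm.ne (referee_inv_unique (isExec_iff.2 ⟨C, hC⟩) hp hj hm)

end Referee

section PrefE

variable {n : ℕ} {S : Spec n}

theorem prefE_succ (E : ℕ → Event n S) (m : ℕ) : prefE E (m + 1) = prefE E m ++ [E m] := by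
  simp [prefE, List.range_succ]

theorem prefE_getElem? (E : ℕ → Event n S) {k m : ℕ} (h : k < m) :
    (prefE E m)[k]? = some (E k) := by
  simp [prefE, h]

theorem prefE_prefix (E : ℕ → Event n S) {m m' : ℕ} (h : m ≤ m') : prefE E m <+: prefE E m' := by
  have h' : prefE E m = (prefE E m').take m := by
    rw [prefE, prefE, ← List.map_take, List.take_range, min_eq_left h]
  exact h' ▸ List.take_prefix m _

theorem prefE_dite_length (α : List (Event n S)) (E : ℕ → Event n S) (m : ℕ) :
    prefE (fun k => if h : k < α.length then α[k] else E (k - α.length)) (α.length + m) =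
      α ++ prefE E m := by
  refine List.ext_getElem (by simp [prefE]) fun k h₁ h₂ => ?_
  simp [prefE, List.getElem_append]

theorem WaitFree.exists_ne_step {ι : Type} {M : ι → BaseObject} {A : Impl n S ι M}
    (hWF : WaitFree A) {α : List (Event n S)} {E : ℕ → Event n S}
    (hE : ∀ m, IsExec A (α ++ prefE E m)) (r : Fin n) (m₀ : ℕ) : ∃ m ≥ m₀, E m ≠ .step r := by
  by_contra! hsteps
  set E' : ℕ → Event n S := fun k => if h : k < α.length then α[k] else E (k - α.length)
  have hE' : ∀ k, E' (α.length + k) = E k := fun k => by simp [E']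
  have hexec : ∀ m, IsExec A (prefE E' m) := fun m =>
    (prefE_dite_length α E m ▸ hE m).of_prefix (prefE_prefix E' (by omega))
  obtain ⟨m, hm, v, hv⟩ := hWF E' hexec r
    (fun m => ⟨α.length + (m₀ + m), by omega, by rw [hE']; exact hsteps _ (by omega)⟩)
    (α.length + m₀)
  obtain ⟨k, rfl⟩ := Nat.exists_eq_add_of_le (hm.trans' (Nat.le_add_right _ _))
  rw [hE', hsteps k (by omega)] at hv
  cases hv

end PrefE

section Solo

variable {n : ℕ} {ι : Type} {M : ι → BaseObject} {A : Impl n (LLContestSpec n) ι M}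

theorem llNextEvent_proc (C : Config A) (r : Fin n) : (llNextEvent A C r).proc = r := by
  unfold llNextEvent
  split
  · rfl
  · split <;> rfl

theorem nextConfig_llNextEvent_isSome {C : Config A} {r : Fin n}
    (hr : C.pend r ≠ none ∨ r.val ≠ 0) : (nextConfig A C (llNextEvent A C r)).isSome := by
  unfold llNextEvent
  split
  · simp_all [nextConfig, LLContestSpec]
  · split <;> simp_all [nextConfig]

theorem llNextEvent_eq_step {C : Config A} {r : Fin n} (hr : C.pend r ≠ none)
    (hres : ∀ v, llNextEvent A C r ≠ .res r v) : llNextEvent A C r = .step r := by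
  obtain ⟨op, hop⟩ := Option.ne_none_iff_exists'.1 hr
  unfold llNextEvent at hres ⊢
  simp only [hop] at hres ⊢
  cases hret : A.ret r (C.loc r) with
  | none => rfl
  | some v => simp [hret] at hres

-- Once `r` has no enabled step, the run stays put.
variable (A) in
noncomputable def soloConfig (C : Config A) (r : Fin n) : ℕ → Config A
  | 0 => C
  | m + 1 => (nextConfig A (soloConfig C r m) (llNextEvent A (soloConfig C r m) r)).getD
      (soloConfig C r m)

variable (A) in
noncomputable def soloEvent (C : Config A) (r : Fin n) (m : ℕ) : Event n (LLContestSpec n) :=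
  llNextEvent A (soloConfig A C r m) r

theorem soloEvent_proc (C : Config A) (r : Fin n) (m : ℕ) : (soloEvent A C r m).proc = r :=
  llNextEvent_proc _ r

theorem nextConfig_soloEvent {C : Config A} {r : Fin n} {m : ℕ}
    (hr : (soloConfig A C r m).pend r ≠ none ∨ r.val ≠ 0) :
    nextConfig A (soloConfig A C r m) (soloEvent A C r m) = some (soloConfig A C r (m + 1)) := by
  obtain ⟨D, hD⟩ := Option.isSome_iff_exists.1 (nextConfig_llNextEvent_isSome hr)
  simp only [soloEvent, soloConfig, hD, Option.getD_some]

theorem execConfig_append_prefE_soloEvent {α : List (Event n (LLContestSpec n))} {C : Config A}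
    {r : Fin n} {m : ℕ} (hC : execConfig A α = some C)
    (hr : ∀ k < m, (soloConfig A C r k).pend r ≠ none ∨ r.val ≠ 0) :
    execConfig A (α ++ prefE (soloEvent A C r) m) = some (soloConfig A C r m) := by
  induction m with
  | zero => simpa [prefE, soloConfig] using hC
  | succ m ih =>
    rw [prefE_succ, ← List.append_assoc, execConfig_snoc,
      ih fun k hk => hr k (by omega)]
    exact nextConfig_soloEvent (hr m (by omega))

theorem soloConfig_pend_ne_none {C : Config A} {r : Fin n} {m₀ m : ℕ}
    (h₀ : (soloConfig A C r m₀).pend r ≠ none) (hm : m₀ ≤ m)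
    (hres : ∀ k, m₀ ≤ k → k < m → ∀ v, soloEvent A C r k ≠ .res r v) :
    (soloConfig A C r m).pend r ≠ none := by
  induction m, hm using Nat.le_induction with
  | base => exact h₀
  | succ m hm ih =>
    have hpend := nextConfig_pend_ne_none (nextConfig_soloEvent (.inl (ih fun k h₁ h₂ =>
      hres k h₁ (by omega)))) (by simpa [soloEvent_proc] using hres m hm (by omega))
    rwa [soloEvent_proc] at hpend

theorem exists_soloEvent_res (hWF : WaitFree A) {α : List (Event n (LLContestSpec n))}
    {C : Config A} {r : Fin n} {m₀ : ℕ} (hC : execConfig A α = some C)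
    (hr : ∀ k < m₀, (soloConfig A C r k).pend r ≠ none ∨ r.val ≠ 0)
    (h₀ : (soloConfig A C r m₀).pend r ≠ none) :
    ∃ m ≥ m₀, ∃ v, soloEvent A C r m = .res r v := by
  by_contra! hres
  have hpend : ∀ m ≥ m₀, (soloConfig A C r m).pend r ≠ none := fun m hm =>
    soloConfig_pend_ne_none h₀ hm fun k hk _ => hres k hk
  have hexec : ∀ m, IsExec A (α ++ prefE (soloEvent A C r) m) := fun m =>
    isExec_iff.2 ⟨_, execConfig_append_prefE_soloEvent hC fun k _ =>
      if hk : k < m₀ then hr k hk else .inl (hpend k (by omega))⟩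
  obtain ⟨m, hm, hstep⟩ := hWF.exists_ne_step hexec r m₀
  exact hstep (llNextEvent_eq_step (hpend m hm) (hres m hm))

theorem exists_solo_completion (hWF : WaitFree A) {α : List (Event n (LLContestSpec n))}
    {C : Config A} (hC : execConfig A α = some C) (r : Fin n) :
    ∃ γ D, (∀ e ∈ γ, e.proc = r) ∧ execConfig A (α ++ γ) = some D ∧ D.pend r = none := by
  classical
  by_cases hidle : C.pend r = none
  · exact ⟨[], C, by simp, by simpa using hC, hidle⟩
  have hex : ∃ m, ∃ v, soloEvent A C r m = .res r v := by
    obtain ⟨m, -, hm⟩ := exists_soloEvent_res (m₀ := 0) hWF hC (by simp) hidle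
    exact ⟨m, hm⟩
  obtain ⟨v, hv⟩ := Nat.find_spec hex
  have hpend : ∀ k ≤ Nat.find hex, (soloConfig A C r k).pend r ≠ none := fun k hk =>
    soloConfig_pend_ne_none (m₀ := 0) hidle (Nat.zero_le k) fun j _ hj => by
      simpa using Nat.find_min hex (by omega)
  refine ⟨prefE (soloEvent A C r) (Nat.find hex + 1), _, fun e he => ?_,
    execConfig_append_prefE_soloEvent hC fun k hk => .inl (hpend k (by omega)), ?_⟩
  · obtain ⟨k, -, rfl⟩ := List.mem_map.1 he
    exact soloEvent_proc C r k
  · have hstep := nextConfig_soloEvent (.inl (hpend _ le_rfl))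
    rw [hv] at hstep
    exact (nextConfig_res_eq_some hstep).2.2.1

theorem frequently_soloEvent_res (hWF : WaitFree A) {α : List (Event n (LLContestSpec n))}
    {C : Config A} {r : Fin n} (hC : execConfig A α = some C) (hr : r.val ≠ 0) (m₀ : ℕ) :
    ∃ m ≥ m₀, ∃ v, soloEvent A C r m = .res r v := by
  by_cases hres : ∃ v, soloEvent A C r m₀ = .res r v
  · exact ⟨m₀, le_rfl, hres⟩
  simp only [not_exists] at hres
  have hpend := nextConfig_pend_ne_none (nextConfig_soloEvent (.inr hr))
    (by simpa [soloEvent_proc] using hres)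
  rw [soloEvent_proc] at hpend
  obtain ⟨m, hm, hv⟩ := exists_soloEvent_res hWF hC (fun _ _ => .inr hr) hpend
  exact ⟨m, by omega, hv⟩

end Solo

section Counting

variable {n : ℕ}

theorem countP_le_of_seqRun_decide {s : (LLContestSpec n).State}
    {l : List (Fin n × (LLContestSpec n).Op × (LLContestSpec n).Res)}
    (hrun : SeqRun (LLContestSpec n) s l) {d : ℕ} {i q : Fin n} {x : ℕ}
    (hd : l[d]? = some (i, ContestOp.decide, some x)) (hq : q.val ≠ 0) :
    s.1 q + (l.take d).countP (fun e => e.1 = q) ≤ x := by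
  induction hrun generalizing d with
  | nil => simp at hd
  | @cons s i' op s' r l hδ _ ih =>
    cases d with
    | zero =>
      cases hd
      obtain ⟨⟨⟩, -⟩ | ⟨-, -, -, -, -, x', hx', hle⟩ := hδ
      cases hx'
      simpa using hle q hq
    | succ d =>
      rw [List.getElem?_cons_succ] at hd
      have h := ih hd
      rw [List.take_succ_cons, List.countP_cons]
      obtain ⟨rfl, -, rfl, -⟩ | ⟨-, hi', -, -, hs, -⟩ := hδ
      · by_cases hiq : i' = q
        · subst hiq
          simp only [Function.update_self] at h
          simp only [decide_true, if_true]
          omega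
        · simp only [Function.update_of_ne (Ne.symm hiq)] at h
          simp only [hiq, decide_false, Bool.false_eq_true, if_false]
          omega
      · have hiq : i' ≠ q := fun h => hq (h ▸ hi')
        simp only [hiq, decide_false, Bool.false_eq_true, if_false, hs] at h ⊢
        omega

theorem card_le_of_linearization_decide {ω : List (Event n (LLContestSpec n))}
    {σ : List (ℕ × (LLContestSpec n).Res)} (hσ : IsLinearization (LLContestSpec n) ω σ)
    {d j : ℕ} {i q : Fin n} {x : ℕ} (hd : σ[d]? = some (j, some x))
    (hj : ω[j]? = some (.inv i .decide)) (hq : q.val ≠ 0) (J : Finset ℕ)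
    (hJσ : ∀ j' ∈ J, ∃ r, (j', r) ∈ σ.take d)
    (hJq : ∀ j' ∈ J, ∃ op, ω[j']? = some (.inv q op)) : J.card ≤ x := by
  obtain ⟨l, hσl, hrun⟩ := hσ.valid
  obtain ⟨⟨i', op, r⟩, hld, hj', hr⟩ := hσl.exists_getElem?_eq_some hd
  rw [hj] at hj'
  cases hj'
  cases hr
  have hcount := countP_le_of_seqRun_decide hrun hld hq
  have hle := (List.forall₂_take d hσl).countP_le (P := fun e => e.1 ∈ J)
    (Q := fun e => e.1 = q) fun a b hab ha => by
      obtain ⟨op', hop'⟩ := hJq a.1 (by simpa using ha)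
      rw [hop'] at hab
      cases hab.1
      simp
  exact (Finset.card_le_countP_fst_mem _ J hJσ).trans (hle.trans (le_of_add_le_right hcount))

end Counting

section Linearization

variable {n : ℕ} {ι : Type} {M : ι → BaseObject} {A : Impl n (LLContestSpec n) ι M}
  {L : List (Event n (LLContestSpec n)) → List (ℕ × (LLContestSpec n).Res)}

theorem card_res_le_of_decide_linearized_after (hLin : IsLinFun A L)
    (hPre : PrefixClosedLin A L) {ω γ : List (Event n (LLContestSpec n))}
    (hexec : IsExec A (ω ++ γ)) {i q : Fin n} {j x : ℕ} (hq : q.val ≠ 0)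
    (hj : (ω ++ γ)[j]? = some (.inv i .decide)) (hx : (j, some x) ∈ L (ω ++ γ))
    (hnot : ∀ r, (j, r) ∉ L ω) (K : Finset ℕ) (hK : ∀ k ∈ K, ∃ v, ω[k]? = some (.res q v)) :
    K.card ≤ x := by
  have hω : IsExec A ω := hexec.of_prefix (List.prefix_append _ _)
  obtain ⟨d, hd⟩ := List.mem_iff_getElem?.1 hx
  have hpre : L ω <+: (L (ω ++ γ)).take d := by
    refine List.prefix_take_iff.2 ⟨hPre ω γ hexec, ?_⟩
    by_contra! hlt
    apply hnot (some x)
    rw [List.prefix_iff_eq_take.1 (hPre ω γ hexec)]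
    exact List.mem_of_getElem? (by rwa [List.getElem?_take, if_pos hlt])
  have hmatch : ∀ k, ∃ j', k ∈ K → ∃ v, Matches ω j' k v := fun k => by
    by_cases hk : k ∈ K
    · obtain ⟨v, hv⟩ := hK k hk
      obtain ⟨j', hj'⟩ := exists_matches_of_getElem?_res hω hv
      exact ⟨j', fun _ => ⟨v, hj'⟩⟩
    · exact ⟨0, fun h => (hk h).elim⟩
  choose invPos hinvPos using hmatch
  have hinj : Set.InjOn invPos K := fun k hk k' hk' h => by
    obtain ⟨v, hv⟩ := hinvPos k hk
    obtain ⟨v', hv'⟩ := hinvPos k' hk'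
    exact hv.right_unique (h ▸ hv')
  rw [← Finset.card_image_of_injOn hinj]
  refine card_le_of_linearization_decide (hLin _ hexec) hd hj hq _ (fun j' hj' => ?_)
    (fun j' hj' => ?_)
  · obtain ⟨k, hk, rfl⟩ := Finset.mem_image.1 hj'
    obtain ⟨v, hv⟩ := hinvPos k hk
    exact ⟨v, hpre.subset ((hLin ω hω).complete_mem _ _ _ hv)⟩
  · obtain ⟨k, hk, rfl⟩ := Finset.mem_image.1 hj'
    obtain ⟨v, ⟨i', op, hi', hk', -⟩⟩ := hinvPos k hk
    obtain ⟨v', hv'⟩ := hK k hk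
    rw [hv'] at hk'
    cases hk'
    exact ⟨op, List.getElem?_append_of_eq_some hi'⟩

theorem decidesVal_of_lt_card_res (hLin : IsLinFun A L) (hPre : PrefixClosedLin A L)
    {ω γ : List (Event n (LLContestSpec n))} (hexec : IsExec A (ω ++ γ)) {p q : Fin n} {j x : ℕ}
    (hp : p.val = 0) (hq : q.val ≠ 0) (hj : (ω ++ γ)[j]? = some (.inv p .decide))
    (hx : (j, some x) ∈ L (ω ++ γ)) (K : Finset ℕ) (hK : x < K.card)
    (hKres : ∀ k ∈ K, ∃ v, ω[k]? = some (.res q v)) : DecidesVal L ω x := by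
  by_cases h : ∃ r, (j, r) ∈ L ω
  · obtain ⟨r, hr⟩ := h
    have hrx : r = some x := congrArg Prod.snd <|
      List.inj_on_of_nodup_map (hLin _ hexec).nodup ((hPre ω γ hexec).subset hr) hx rfl
    obtain ⟨i, op, hi⟩ := (hLin ω (hexec.of_prefix (List.prefix_append _ _))).inv_mem _ hr
    have hi' := List.getElem?_append_of_eq_some (l' := γ) hi
    rw [hj] at hi'
    exact ⟨j, p, hp, by rw [hi, hi'], hrx ▸ hr⟩
  · simp only [not_exists] at h
    exact absurd (card_res_le_of_decide_linearized_after hLin hPre hexec hq hj hx h K hKres)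
      (not_le.2 hK)

theorem DecidesVal.append (hPre : PrefixClosedLin A L) {ω δ : List (Event n (LLContestSpec n))}
    (hexec : IsExec A (ω ++ δ)) {x : ℕ} (h : DecidesVal L ω x) : DecidesVal L (ω ++ δ) x := by
  obtain ⟨j, i, hi, hj, hx⟩ := h
  exact ⟨j, i, hi, List.getElem?_append_of_eq_some hj, (hPre ω δ hexec).subset hx⟩

end Linearization

section Valency

variable {n : ℕ} {ι : Type} {M : ι → BaseObject} {A : Impl n (LLContestSpec n) ι M}
  {L : List (Event n (LLContestSpec n)) → List (ℕ × (LLContestSpec n).Res)}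

theorem exists_solo_extension_decidesVal (hWF : WaitFree A) (hPre : PrefixClosedLin A L)
    {α : List (Event n (LLContestSpec n))} {C : Config A} (hClosed : ClosedExec A L α)
    (hC : execConfig A α = some C) {q : Fin n} (hq : q.val ≠ 0) :
    ∃ β x, (∀ e ∈ β, e.proc = q) ∧ IsExec A (α ++ β) ∧ DecidesVal L (α ++ β) x ∧
      ∃ K : Finset ℕ, x < K.card ∧ ∀ k ∈ K, ∃ v, β[k]? = some (.res q v) := by
  set E := soloEvent A C q
  have hexec : ∀ m, IsExec A (α ++ prefE E m) := fun m =>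
    isExec_iff.2 ⟨_, execConfig_append_prefE_soloEvent hC fun _ _ => .inr hq⟩
  obtain ⟨m₀, x, hdec⟩ := hClosed E (fun m => by rw [soloEvent_proc]; exact hq) hexec
  have hinf : {m | ∃ v, E m = .res q v}.Infinite := Nat.frequently_atTop_iff_infinite.1
    (Filter.frequently_atTop.2 (frequently_soloEvent_res hWF hC hq))
  obtain ⟨K, hKres, hKcard⟩ := hinf.exists_subset_card_eq (x + 1)
  obtain ⟨m₁, hm₀, hm₁⟩ : ∃ m₁, m₀ ≤ m₁ ∧ ∀ k ∈ K, k < m₁ :=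
    ⟨max m₀ (K.sup id + 1), le_max_left _ _,
      fun k hk => lt_max_of_lt_right (Nat.lt_succ_of_le (Finset.le_sup (f := id) hk))⟩
  refine ⟨prefE E m₁, x, fun e he => ?_, hexec m₁, ?_, K, by omega, fun k hk => ?_⟩
  · obtain ⟨k, -, rfl⟩ := List.mem_map.1 he
    exact soloEvent_proc C q k
  · obtain ⟨δ, hδ⟩ := prefE_prefix E hm₀
    have hexec₁ := hexec m₁
    rw [← hδ, ← List.append_assoc] at hexec₁ ⊢
    exact hdec.append hPre hexec₁
  · obtain ⟨v, hv⟩ := hKres hk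
    exact ⟨v, by rw [prefE_getElem? E (hm₁ k hk), hv]⟩

theorem exists_extension_decide_mem (hWF : WaitFree A) (hLin : IsLinFun A L)
    (hPre : PrefixClosedLin A L) {ω ω' : List (Event n (LLContestSpec n))} {D D' : Config A}
    {s : Set (Fin n)} {p : Fin n} {x : ℕ} (hD : execConfig A ω = some D)
    (hD' : execConfig A ω' = some D') (hDD' : D.AgreeOn s D') (hps : p ∈ s) (hp : p.val = 0)
    (hdec : DecidesVal L ω x) :
    ∃ γ j, IsExec A (ω' ++ γ) ∧ (ω' ++ γ)[j]? = some (.inv p .decide) ∧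
      (j, some x) ∈ L (ω' ++ γ) := by
  obtain ⟨j, i, hi, hj, hx⟩ := hdec
  obtain rfl : i = p := Fin.ext (hi.trans hp.symm)
  obtain ⟨γ, E, hγ, hE, hidle⟩ := exists_solo_completion hWF hD i
  obtain ⟨E', hE', hEE'⟩ := hDD'.execConfig_append hD hD' (fun e he => hγ e he ▸ hps) hE
  obtain ⟨hloc, hpend, hhist⟩ := Config.procState_eq_iff.1 (hEE'.2 i hps)
  have hexec : IsExec A (ω ++ γ) := isExec_iff.2 ⟨E, hE⟩
  have hjγ := List.getElem?_append_of_eq_some (l' := γ) hj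
  obtain ⟨k, r, hret, hk⟩ := referee_matches_of_pend_eq_none hE hp hidle hjγ
  have hrx : r = some x :=
    ((hLin _ hexec).complete_out j k r _ hk ((hPre ω γ hexec).subset hx)).symm
  obtain ⟨j', hj'⟩ := exists_referee_inv hE' hp
    (hhist ▸ (exists_inv_mem_iff_hist_ne_nil i hE).1 ⟨_, List.mem_of_getElem? hjγ⟩)
  obtain ⟨k', r', hret', hk'⟩ := referee_matches_of_pend_eq_none hE' hp (hpend ▸ hidle) hj'
  obtain rfl : r' = r := Option.some.inj (hret'.symm.trans (hloc ▸ hret))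
  have hexec' : IsExec A (ω' ++ γ) := isExec_iff.2 ⟨E', hE'⟩
  exact ⟨γ, j', hexec', hj', hrx ▸ (hLin _ hexec').complete_mem _ _ _ hk'⟩

end Valency

/-- (Lemma `indist`.) Let `A` be a wait-free strongly linearizable
implementation of the long-lived contest object with prefix-closed linearization
function `L`.  Let `α` be a closed execution that is indistinguishable from an
execution `α'` to the referee `p₀` and to a competitor `q`.
Then `W(α) ∩ W(α') ≠ ∅`. -/
theorem closed_indistinguishable_valencies_intersect :
    ∀ (n : ℕ) (hn : 2 ≤ n) (ι : Type) (M : ι → BaseObject)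
      (A : Impl n (LLContestSpec n) ι M)
      (L : List (Event n (LLContestSpec n)) → List (ℕ × (LLContestSpec n).Res)),
      WaitFree A → IsLinFun A L → PrefixClosedLin A L →
      ∀ (α α' : List (Event n (LLContestSpec n))) (q : Fin n), q.val ≠ 0 →
        IsExec A α → IsExec A α' →
        ClosedExec A L α →
        ExecIndistTo A α α' (⟨0, by omega⟩ : Fin n) →
        ExecIndistTo A α α' q →
        (Wset A L α ∩ Wset A L α').Nonempty := by
  intro n hn ι M A L hWF hLin hPre α α' q hq _ _ hClosed hαp hαq
  obtain ⟨C, C', hC, hC', hCC'⟩ := exists_agreeOn_pair_of_execIndistTo hαp hαq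
  obtain ⟨β, x, hβ, hαβ, hdec, K, hK, hKres⟩ :=
    exists_solo_extension_decidesVal hWF hPre hClosed hC hq
  have hβc : CompetitorsOnly β := fun e he => hβ e he ▸ hq
  obtain ⟨D, hD⟩ := isExec_iff.1 hαβ
  obtain ⟨D', hD', hDD'⟩ := hCC'.execConfig_append hC hC' (fun e he => by simp [hβ e he]) hD
  obtain ⟨γ, j, hexec, hj, hx⟩ :=
    exists_extension_decide_mem hWF hLin hPre hD hD' hDD' (Set.mem_insert _ _) rfl hdec
  refine ⟨x, ⟨β, hβc, hαβ, hdec⟩, β, hβc, isExec_iff.2 ⟨D', hD'⟩, ?_⟩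
  refine decidesVal_of_lt_card_res hLin hPre hexec rfl hq hj hx (K.map (addLeftEmbedding α'.length))
    (by simpa using hK) fun k hk => ?_
  obtain ⟨k, hkK, rfl⟩ := Finset.mem_map.1 hk
  simp only [addLeftEmbedding_apply]
  rw [List.getElem?_append_right (Nat.le_add_right _ _), Nat.add_sub_cancel_left]
  exact hKres k hkK
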